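/- arXiv:0804.1424 — 3 statements merged into one kernel-verified Lean document; each statement's English description precedes it below -/
import Mathlib

section
/- Let n ≥ 2 and let (φ_{ij}) ∈ SL(n,ℝ) and α_1,…,α_n be positive reals with α_1⋯α_n = 1. Then there exist integers x_1,…,x_n, not all zero, such that |φ_{11}x_1+⋯+φ_{1n}x_n| ≤ α_1 and |φ_{i1}x_1+⋯+φ_{in}x_n| < α_i for 2 ≤ i ≤ n. -/
/-!
Minkowski's convex body theorem for `ℤⁿ`, applied to the open symmetric convex set
`{v | ∀ i, |(φ v) i| < β i}` of volume `2ⁿ ∏ β i / |det φ|`, gives a nonzero integer point with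
all forms strictly bounded as soon as `|det φ| < ∏ β i`.
For the mixed bounds, enlarge only the `i₀`-th bound to `α i₀ + δ`. Every nonzero integer point
with the other forms strictly bounded and the `i₀`-th form at most `α i₀ + 1` lies in a finite set,
so if each of them had `i₀`-th form `> α i₀`, a small enough `δ` would leave none, contradicting
the strict case.
-/

open Matrix Finset
open MeasureTheory Filter Topology

section

variable {ι : Type*} [Fintype ι]

theorem mem_span_pi_basisFun_iff {v : ι → ℝ} :
    v ∈ Submodule.span ℤ (Set.range (Pi.basisFun ℝ ι)) ↔ ∃ x : ι → ℤ, (fun i ↦ (x i : ℝ)) = v := by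
  rw [Module.Basis.mem_span_iff_repr_mem]
  simp [funext_iff, Classical.skolem, eq_comm]

theorem exists_intVec_ne_zero_mem_of_two_pow_card_lt_volume {s : Set (ι → ℝ)}
    (h_symm : ∀ v ∈ s, -v ∈ s) (h_conv : Convex ℝ s) (h : 2 ^ Fintype.card ι < volume s) :
    ∃ x : ι → ℤ, x ≠ 0 ∧ (fun i ↦ (x i : ℝ)) ∈ s := by
  have : Countable (Submodule.span ℤ (Set.range (Pi.basisFun ℝ ι))).toAddSubgroup :=
    inferInstanceAs (Countable (Submodule.span ℤ (Set.range (Pi.basisFun ℝ ι))))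
  have fund := ZSpan.isAddFundamentalDomain' (Pi.basisFun ℝ ι) volume
  have h_fund : volume (ZSpan.fundamentalDomain (Pi.basisFun ℝ ι)) = 1 := by
    rw [ZSpan.fundamentalDomain_pi_basisFun, volume_pi_pi]
    simp
  obtain ⟨⟨v, hv⟩, hv0, hvs⟩ :=
    exists_ne_zero_mem_lattice_of_measure_mul_two_pow_lt_measure (μ := volume) fund h_symm 
      h_conv (by rwa [h_fund, one_mul, Module.finrank_fintype_fun_eq_card])
  obtain ⟨x, rfl⟩ := mem_span_pi_basisFun_iff.mp hv
  refine ⟨x, ?_, hvs⟩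
  rintro rfl
  exact hv0 (Subtype.ext (funext fun _ ↦ Int.cast_zero))

variable [DecidableEq ι]

theorem exists_intVec_ne_zero_abs_mulVec_lt (φ : Matrix ι ι ℝ) (hφ : φ.det ≠ 0)
    (β : ι → ℝ) (hβ : ∀ i, 0 ≤ β i) (hprod : |φ.det| < ∏ i, β i) :
    ∃ x : ι → ℤ, x ≠ 0 ∧ ∀ i, |(φ *ᵥ fun j ↦ (x j : ℝ)) i| < β i := by
  set box : Set (ι → ℝ) := Set.univ.pi fun i ↦ Set.Ioo (-β i) (β i)
  have h_symm : ∀ v ∈ toLin' φ ⁻¹' box, -v ∈ toLin' φ ⁻¹' box := by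
    intro v hv i _
    have := hv i trivial
    simp only [map_neg, Pi.neg_apply, Set.mem_Ioo] at this ⊢
    constructor <;> linarith [this.1, this.2]
  have h_conv : Convex ℝ (toLin' φ ⁻¹' box) :=
    (convex_pi fun i _ ↦ convex_Ioo _ _).linear_preimage _
  have h_vol : 2 ^ Fintype.card ι < volume (toLin' φ ⁻¹' box) := by
    rw [Measure.addHaar_preimage_linearMap _ (by rwa [LinearMap.det_toLin']), volume_pi_pi,
      LinearMap.det_toLin']
    have h_box : ∏ i, (β i - -β i) = 2 ^ Fintype.card ι * ∏ i, β i := by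
      simp only [sub_neg_eq_add, ← two_mul, prod_mul_distrib, prod_const, card_univ]
    have h_real : (2 : ℝ) ^ Fintype.card ι < |φ.det⁻¹| * ∏ i, (β i - -β i) := by
      rw [h_box, abs_inv, inv_mul_eq_div, lt_div_iff₀ (abs_pos.mpr hφ)]
      gcongr
    simp only [Real.volume_Ioo]
    rw [← ENNReal.ofReal_prod_of_nonneg fun i _ ↦ by linarith [hβ i],
      ← ENNReal.ofReal_mul (abs_nonneg _), ← ENNReal.ofReal_ofNat, ← ENNReal.ofReal_pow zero_le_two,
      ENNReal.ofReal_lt_ofReal_iff_of_nonneg (by positivity)]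
    exact h_real
  obtain ⟨x, hx0, hx⟩ := exists_intVec_ne_zero_mem_of_two_pow_card_lt_volume h_symm h_conv h_vol
  exact ⟨x, hx0, fun i ↦ abs_lt.mpr (hx i trivial)⟩

theorem finite_setOf_abs_mulVec_le (φ : Matrix ι ι ℝ) (hφ : φ.det ≠ 0) (C : ι → ℝ) :
    {x : ι → ℤ | ∀ i, |(φ *ᵥ fun j ↦ (x j : ℝ)) i| ≤ C i}.Finite := by
  set K : Set (ι → ℝ) := toLin' φ⁻¹ '' Set.Icc (-C) C
  have hK : Bornology.IsBounded K :=
    (Metric.isBounded_Icc _ _).image (LinearMap.toContinuousLinearMap (toLin' φ⁻¹))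
  refine ((ZSpan.setFinite_inter (Pi.basisFun ℝ ι) hK).preimage
    (fun x _ y _ h ↦ funext fun i ↦ Int.cast_injective (congrFun h i))).subset ?_
  intro x hx
  refine ⟨⟨φ *ᵥ fun j ↦ (x j : ℝ),
    ⟨fun i ↦ (abs_le.mp (hx i)).1, fun i ↦ (abs_le.mp (hx i)).2⟩, ?_⟩,
    mem_span_pi_basisFun_iff.mpr ⟨x, rfl⟩⟩
  simp [mulVec_mulVec, nonsing_inv_mul φ (Ne.isUnit hφ)]

theorem exists_intVec_ne_zero_abs_mulVec_le_lt (φ : Matrix ι ι ℝ) (hφ : φ.det ≠ 0)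
    (α : ι → ℝ) (hα : ∀ i, 0 < α i) (hprod : |φ.det| ≤ ∏ i, α i) (i₀ : ι) :
    ∃ x : ι → ℤ, x ≠ 0 ∧ |(φ *ᵥ fun j ↦ (x j : ℝ)) i₀| ≤ α i₀ ∧
      ∀ i ≠ i₀, |(φ *ᵥ fun j ↦ (x j : ℝ)) i| < α i := by
  set L : (ι → ℤ) → ι → ℝ := fun x ↦ φ *ᵥ fun j ↦ (x j : ℝ)
  set S := {x : ι → ℤ | ∀ i, |L x i| ≤ α i + 1} ∩ {x | x ≠ 0 ∧ ∀ i ≠ i₀, |L x i| < α i}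
  have hS : S.Finite := (finite_setOf_abs_mulVec_le φ hφ _).subset Set.inter_subset_left
  by_contra! h_far
  have h_gap : ∀ x ∈ S, α i₀ < |L x i₀| := by
    rintro x ⟨-, hx0, hx_lt⟩
    by_contra! hle
    obtain ⟨i, hi, hge⟩ := h_far x hx0 hle
    exact (hx_lt i hi).not_ge hge
  obtain ⟨δ, hδ_gap, hδ_pos, hδ_le⟩ :
      ∃ δ : ℝ, (∀ x ∈ S, α i₀ + δ < |L x i₀|) ∧ 0 < δ ∧ δ ≤ 1 := by
    have h_ev : ∀ᶠ δ in 𝓝[>] (0 : ℝ), ∀ x ∈ S, α i₀ + δ < |L x i₀| :=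
      hS.eventually_all.mpr fun x hx ↦ eventually_nhdsWithin_of_eventually_nhds <|
        (eventually_lt_nhds (sub_pos.mpr (h_gap x hx))).mono fun δ hδ ↦ by linarith
    have h_le : ∀ᶠ δ in 𝓝[>] (0 : ℝ), δ ≤ 1 :=
      eventually_nhdsWithin_of_eventually_nhds (eventually_le_nhds one_pos)
    obtain ⟨δ, ⟨hδ_gap, hδ_pos⟩, hδ_le⟩ := ((h_ev.and self_mem_nhdsWithin).and h_le).exists
    exact ⟨δ, hδ_gap, hδ_pos, hδ_le⟩
  set β := Function.update α i₀ (α i₀ + δ)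
  have hβ_le : ∀ i, α i ≤ β i ∧ β i ≤ α i + 1 := by
    intro i
    rcases eq_or_ne i i₀ with rfl | hi
    · simp only [β, Function.update_self]
      constructor <;> linarith
    · simp [β, hi]
  have hβ_prod : |φ.det| < ∏ i, β i := by
    have h_split := prod_eq_mul_prod_sdiff_singleton (s := univ) i₀ α (by simp)
    have h_rest : 0 < ∏ i ∈ univ \ {i₀}, α i := prod_pos fun i _ ↦ hα i
    rw [prod_update_of_mem (mem_univ i₀)]
    nlinarith
  obtain ⟨x, hx0, hx⟩ := exists_intVec_ne_zero_abs_mulVec_lt φ hφ β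
    (fun i ↦ (hα i).le.trans (hβ_le i).1) hβ_prod
  have hxS : x ∈ S :=
    ⟨fun i ↦ (hx i).le.trans (hβ_le i).2, hx0, fun i hi ↦ by simpa [β, hi] using hx i⟩
  have hx₀ := hx i₀
  simp only [β, Function.update_self] at hx₀
  linarith [hδ_gap x hxS]

end

/-- **Minkowski's theorem on linear forms.** If `φ ∈ SL(n,ℝ)` and `α_1,…,α_n` are
positive reals with product `1`, then there is a nonzero integer vector `x` with
`|∑ j, φ 0 j * x j| ≤ α 0` and `|∑ j, φ i j * x j| < α i` for all `i ≠ 0`. -/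
theorem minkowski_linear_forms (n : ℕ) (hn : 2 ≤ n)
    (φ : Matrix (Fin n) (Fin n) ℝ) (hφ : φ.det = 1)
    (α : Fin n → ℝ) (hα : ∀ i, 0 < α i) (hprod : ∏ i, α i = 1) :
    ∃ x : Fin n → ℤ, x ≠ 0 ∧
      |∑ j, φ ⟨0, by omega⟩ j * (x j : ℝ)| ≤ α ⟨0, by omega⟩ ∧
      ∀ i : Fin n, i ≠ ⟨0, by omega⟩ → |∑ j, φ i j * (x j : ℝ)| < α i :=
  exists_intVec_ne_zero_abs_mulVec_le_lt φ (by simp [hφ]) α hα (by simp [hφ, hprod]) _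
end

section
/- Let n ≥ 2, let N be the upper triangular unipotent group in SL(n,ℝ), and let w ∈ GL(n,ℤ) be a permutation matrix. Then for any u ∈ N, every nonzero vector of the lattice (w u w^{-1})ℤⁿ has supremum norm at least 1. -/
open Matrix

/-- The easy inclusion of the Minkowski–Hajós characterization of `K₁`: for any
upper triangular unipotent `u ∈ SL(n,ℝ)` and permutation matrix `w`, every nonzero
vector of the lattice `(w u w⁻¹)·ℤⁿ` has supremum norm at least `1`. -/
theorem perm_unipotent_lattice_in_K1 (n : ℕ) (hn : 2 ≤ n)
    (u : Matrix (Fin n) (Fin n) ℝ)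
    (hu1 : ∀ i : Fin n, u i i = 1)
    (hu0 : ∀ i j : Fin n, j.val < i.val → u i j = 0)
    (σ : Equiv.Perm (Fin n)) :
    ∀ x : Fin n → ℤ, x ≠ 0 →
      ∃ i, 1 ≤ |((σ.permMatrix ℝ * u * σ⁻¹.permMatrix ℝ).mulVec
        (fun j => (x j : ℝ))) i| := by
  intro x hx
  have hM : σ.permMatrix ℝ * u * σ⁻¹.permMatrix ℝ = u.submatrix σ σ := by
    rw [mul_assoc, PEquiv.mul_toMatrix_toPEquiv, PEquiv.toMatrix_toPEquiv_mul]
    simp [Equiv.Perm.inv_def]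
  rw [hM]
  -- the set of indices with nonzero coordinate, pushed forward by σ
  have hs : (Finset.univ.filter (fun j => x j ≠ 0)).Nonempty := by
    rcases Function.ne_iff.mp hx with ⟨j, hj⟩
    exact ⟨j, by simpa using hj⟩
  have ht : ((Finset.univ.filter (fun j => x j ≠ 0)).image σ).Nonempty :=
    hs.image σ
  set t := (Finset.univ.filter (fun j => x j ≠ 0)).image σ with htdef
  set i := t.max' ht with hidef
  have hi : i ∈ t := t.max'_mem ht
  rcases Finset.mem_image.mp hi with ⟨k, hk, hσk⟩
  have hxk : x k ≠ 0 := by simpa using hk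
  refine ⟨k, ?_⟩
  have hval : (u.submatrix σ σ).mulVec (fun j => (x j : ℝ)) k = (x k : ℝ) := by
    rw [Matrix.mulVec, dotProduct]
    rw [Finset.sum_eq_single k]
    · simp [Matrix.submatrix_apply, hσk, hu1 i]
    · intro j _ hjk
      by_cases hxj : x j = 0
      · simp [hxj]
      · have hjt : σ j ∈ t := Finset.mem_image.mpr ⟨j, by simp [hxj], rfl⟩
        have hle : σ j ≤ i := t.le_max' _ hjt
        have hne : σ j ≠ i := by
          rw [← hσk]; exact fun h => hjk (σ.injective h)
        have hlt : σ j < i := lt_of_le_of_ne hle hne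
        simp [Matrix.submatrix_apply, hσk, hu0 _ _ hlt]
    · intro h; exact absurd (Finset.mem_univ k) h
  rw [hval]
  exact_mod_cast Int.one_le_abs hxk
end

section
/- Let k ≥ 2, n−1 ≥ m_1 > … > m_k ≥ 1, and for t = (t_1,…,t_k) ∈ ℝ^k set A(t) = Σ_ℓ t_ℓ A_ℓ where A_ℓ = m_ℓ E_{1,1} − Σ_{j=2}^{m_ℓ+1} E_{j,j}. Then A(t) = z(t') + (f(t') + t_k) A_k where z(t') commutes with the copy of 𝔰𝔩(m_k+1,ℝ) in the top-left corner of 𝔰𝔩(n,ℝ) and f(t') = Σ_{ℓ=1}^{k−1} ((m_ℓ+1)/(m_k+1)) t_ℓ; in particular f(t') > 0 whenever all t_1,…,t_{k−1} > 0. -/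
open Matrix Finset

/-- The diagonal traceless matrix `A_ℓ = m_ℓ E₁₁ − Σ_{j=2}^{m_ℓ+1} E_{jj}` in `𝔰𝔩(n,ℝ)`. -/
def Adiag (n : ℕ) (mℓ : ℕ) : Matrix (Fin n) (Fin n) ℝ :=
  Matrix.of fun i j =>
    if i = j then (if i.val = 0 then (mℓ : ℝ) else if i.val ≤ mℓ then -1 else 0)
    else 0

/-- The diagonal entry function of `Adiag`. -/
def dfun (mℓ : ℕ) {n : ℕ} (i : Fin n) : ℝ :=
  if i.val = 0 then (mℓ : ℝ) else if i.val ≤ mℓ then -1 else 0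

lemma Adiag_apply_self {n : ℕ} (mℓ : ℕ) (i : Fin n) : Adiag n mℓ i i = dfun mℓ i := by
  simp [Adiag, dfun]

lemma Adiag_apply_ne {n : ℕ} (mℓ : ℕ) {i j : Fin n} (h : i ≠ j) : Adiag n mℓ i j = 0 := by
  simp [Adiag, h]

lemma dfun_key {n : ℕ} (mℓ M : ℕ) (hle : M ≤ mℓ) (i : Fin n) (hi : i.val ≤ M) :
    dfun mℓ i - ((mℓ + 1 : ℕ) : ℝ) / ((M + 1 : ℕ) : ℝ) * dfun M i
      = ((mℓ : ℝ) - (M : ℝ)) / ((M : ℝ) + 1) := by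
  have hM : ((M : ℝ) + 1) ≠ 0 := by positivity
  by_cases h0 : i.val = 0
  · simp only [dfun, h0, if_true]
    push_cast
    field_simp
    ring
  · have h1 : i.val ≤ mℓ := le_trans hi hle
    simp only [dfun, h0, if_false, hi, h1, if_true]
    push_cast
    field_simp
    ring

/-- Decomposition `A(t) = z(t') + (f(t') + t_k)·A_k`, where `z(t')` depends only on
`t' = (t_1,…,t_{k−1})` and commutes with the copy of `𝔰𝔩(m_k+1,ℝ)` in the top-left
corner, and `f(t') = Σ_{ℓ<k} ((m_ℓ+1)/(m_k+1)) t_ℓ > 0` whenever all `t_1,…,t_{k−1} > 0`. -/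
theorem At_decomposition (n k : ℕ) (hn : 2 ≤ n) (hk : 2 ≤ k)
    (m : Fin k → ℕ) (hanti : StrictAnti m)
    (hm1 : m ⟨0, by omega⟩ ≤ n - 1) (hmk : 1 ≤ m ⟨k - 1, by omega⟩) :
    ∃ z : (Fin k → ℝ) → Matrix (Fin n) (Fin n) ℝ,
      (∀ t s : Fin k → ℝ, (∀ ℓ : Fin k, ℓ.val < k - 1 → t ℓ = s ℓ) → z t = z s) ∧
      ∀ t : Fin k → ℝ,
        (∀ B : Matrix (Fin n) (Fin n) ℝ,
          (∀ i j : Fin n, (m ⟨k - 1, by omega⟩ + 1 ≤ i.val ∨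
              m ⟨k - 1, by omega⟩ + 1 ≤ j.val) → B i j = 0) →
          B.trace = 0 → z t * B = B * z t) ∧
        (∑ ℓ : Fin k, t ℓ • Adiag n (m ℓ))
          = z t + ((∑ ℓ : Fin k, if ℓ.val < k - 1 then
              ((m ℓ + 1 : ℕ) : ℝ) / ((m ⟨k - 1, by omega⟩ + 1 : ℕ) : ℝ) * t ℓ else 0)
              + t ⟨k - 1, by omega⟩) • Adiag n (m ⟨k - 1, by omega⟩) ∧
        ((∀ ℓ : Fin k, ℓ.val < k - 1 → 0 < t ℓ) →
          0 < ∑ ℓ : Fin k, if ℓ.val < k - 1 then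
              ((m ℓ + 1 : ℕ) : ℝ) / ((m ⟨k - 1, by omega⟩ + 1 : ℕ) : ℝ) * t ℓ else 0) := by
  have hk1 : k - 1 < k := by omega
  have hKall : ∀ h : k - 1 < k, (⟨k - 1, h⟩ : Fin k) = ⟨k - 1, hk1⟩ := fun _ => rfl
  simp only [hKall]
  set K : Fin k := ⟨k - 1, hk1⟩ with hK
  set M : ℕ := m K with hMdef
  set c : Fin k → ℝ := fun ℓ => ((m ℓ + 1 : ℕ) : ℝ) / ((M + 1 : ℕ) : ℝ) with hc
  have hMle : ∀ ℓ : Fin k, M ≤ m ℓ := by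
    intro ℓ
    have hle : ℓ ≤ K := by
      rw [Fin.le_def]
      show ℓ.val ≤ k - 1
      have := ℓ.isLt; omega
    exact hanti.antitone hle
  refine ⟨fun t => Matrix.diagonal (fun i =>
      ∑ ℓ : Fin k, if ℓ.val < k - 1 then t ℓ * (dfun (m ℓ) i - c ℓ * dfun M i) else 0),
    ?_, ?_⟩
  · intro t s h
    refine congrArg Matrix.diagonal (funext fun i => Finset.sum_congr rfl fun ℓ _ => ?_)
    by_cases hℓ : ℓ.val < k - 1
    · simp [hℓ, h ℓ hℓ]
    · simp [hℓ]
  intro t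
  have hvconst : ∀ i j : Fin n, i.val ≤ M → j.val ≤ M →
      (∑ ℓ : Fin k, if ℓ.val < k - 1 then t ℓ * (dfun (m ℓ) i - c ℓ * dfun M i) else 0)
        = ∑ ℓ : Fin k, if ℓ.val < k - 1 then t ℓ * (dfun (m ℓ) j - c ℓ * dfun M j) else 0 := by
    intro i j hi hj
    refine Finset.sum_congr rfl fun ℓ _ => ?_
    by_cases hℓ : ℓ.val < k - 1
    · simp only [hℓ, if_true, hc]
      rw [dfun_key (m ℓ) M (hMle ℓ) i hi, dfun_key (m ℓ) M (hMle ℓ) j hj]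
    · simp [hℓ]
  refine ⟨?_, ?_, ?_⟩
  · intro B hB _
    ext i j
    rw [Matrix.diagonal_mul, Matrix.mul_diagonal]
    by_cases hij : M + 1 ≤ i.val ∨ M + 1 ≤ j.val
    · rw [hB i j hij]; ring
    · push_neg at hij
      show (∑ ℓ : Fin k, if ℓ.val < k - 1 then t ℓ * (dfun (m ℓ) i - c ℓ * dfun M i) else 0)
            * B i j
          = B i j * ∑ ℓ : Fin k, if ℓ.val < k - 1 then t ℓ * (dfun (m ℓ) j - c ℓ * dfun M j) else 0
      rw [hvconst i j (by omega) (by omega)]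
      ring
  · have key : ∀ i : Fin n, (∑ ℓ : Fin k, t ℓ * dfun (m ℓ) i)
        = (∑ ℓ : Fin k, if ℓ.val < k - 1 then t ℓ * (dfun (m ℓ) i - c ℓ * dfun M i) else 0)
          + ((∑ ℓ : Fin k, if ℓ.val < k - 1 then c ℓ * t ℓ else 0) + t K) * dfun M i := by
      intro i
      rw [add_mul, Finset.sum_mul, ← add_assoc, ← Finset.sum_add_distrib]
      have h1 : ∀ ℓ : Fin k,
          (if ℓ.val < k - 1 then t ℓ * (dfun (m ℓ) i - c ℓ * dfun M i) else 0)
            + (if ℓ.val < k - 1 then c ℓ * t ℓ else 0) * dfun M i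
          = if ℓ.val < k - 1 then t ℓ * dfun (m ℓ) i else 0 := by
        intro ℓ
        by_cases hℓ : ℓ.val < k - 1 <;> simp [hℓ] <;> ring
      rw [Finset.sum_congr rfl fun ℓ _ => h1 ℓ]
      have h2 : ∀ ℓ : Fin k, t ℓ * dfun (m ℓ) i
          = (if ℓ.val < k - 1 then t ℓ * dfun (m ℓ) i else 0)
            + (if ℓ.val < k - 1 then 0 else t ℓ * dfun (m ℓ) i) := by
        intro ℓ
        by_cases hℓ : ℓ.val < k - 1 <;> simp [hℓ]
      rw [Finset.sum_congr rfl fun ℓ _ => h2 ℓ, Finset.sum_add_distrib]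
      congr 1
      rw [Finset.sum_eq_single_of_mem K (Finset.mem_univ K)]
      · rw [if_neg (show ¬(K.val < k - 1) from Nat.lt_irrefl (k-1))]
      · intro ℓ _ hne
        have hℓ : ℓ.val < k - 1 := by
          have h3 : ℓ.val ≠ k - 1 := fun h => hne (Fin.ext h)
          have := ℓ.isLt
          omega
        simp [hℓ]
    ext i j
    simp only [Matrix.sum_apply, Matrix.add_apply, Matrix.smul_apply, smul_eq_mul]
    by_cases hij : i = j
    · subst hij
      simp only [Adiag_apply_self, Matrix.diagonal_apply_eq]
      exact key i
    · simp only [Adiag_apply_ne _ hij, Matrix.diagonal_apply_ne _ hij]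
      simp
  · intro ht
    refine Finset.sum_pos' (fun ℓ _ => ?_) ⟨⟨0, by omega⟩, Finset.mem_univ _, ?_⟩
    · by_cases hℓ : ℓ.val < k - 1
      · simp only [hℓ, if_true]
        have hc0 : 0 < c ℓ := by
          rw [hc]
          have : (0:ℝ) < ((m ℓ + 1 : ℕ) : ℝ) := by positivity
          have : (0:ℝ) < ((M + 1 : ℕ) : ℝ) := by positivity
          positivity
        exact le_of_lt (mul_pos hc0 (ht ℓ hℓ))
      · simp [hℓ]
    · have h0 : ((⟨0, by omega⟩ : Fin k)).val < k - 1 := (by omega : (0:ℕ) < k - 1)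
      rw [if_pos h0]
      have hc0 : 0 < c ⟨0, by omega⟩ := by
        rw [hc]
        positivity
      exact mul_pos hc0 (ht _ h0)
end
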